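/- arXiv:2309.02793 — 4 statements merged into one kernel-verified Lean document; each statement's English description precedes it below -/
import Mathlib

section
/- For any natural numbers δ and k' with k' ≤ C(δ,2), the quantity ∑_{i=2}^{min(δ, k'+1)} (δ - i) is at most C(δ,3) - C(r,3) - C(t,2), where r, t are the unique nonnegative integers with 0 ≤ t < r and C(δ,2) - k' = C(r,2) + t. -/
/-!
Write `m = C(r,2) + t` with `0 ≤ t < r` and put `f(m) = C(r,3) + C(t,2)`. Passing from `m` to
`m + 1` raises `f` by exactly `t`, and `f(m) ≤ C(δ,3)` for `m ≤ C(δ,2)`. Lowering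
`m = C(δ,2) - k'` by one (raising `k'` by one) adds `δ - (k' + 2)` to the sum (truncated
subtraction makes the `min` irrelevant), and this never exceeds the `t` of the new `m`,
because `C(r,2) ≤ C(δ - 1, 2) = C(δ,2) - (δ - 1)`. Induction on `k'` gives
`∑ + f(C(δ,2) - k') ≤ C(δ,3)`.
-/

open Finset

lemma succ_choose_two (n : ℕ) : (n + 1).choose 2 = n.choose 2 + n := by
  rw [Nat.choose_succ_succ', Nat.choose_one_right, add_comm]

lemma succ_choose_three (n : ℕ) : (n + 1).choose 3 = n.choose 3 + n.choose 2 := by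
  rw [Nat.choose_succ_succ', add_comm]

lemma sum_Icc_min_sub_eq (δ n : ℕ) :
    ∑ i ∈ Icc 2 (min δ n), (δ - i) = ∑ i ∈ Icc 2 n, (δ - i) :=
  sum_subset (Icc_subset_Icc_right (min_le_right δ n)) fun i hi hi' => by
    simp only [mem_Icc] at hi hi'
    omega

lemma exists_choose_two_add_succ {r t : ℕ} (ht : t < r) :
    ∃ r' t', t' < r' ∧ r'.choose 2 + t' = r.choose 2 + t + 1 ∧
      r'.choose 3 + t'.choose 2 = r.choose 3 + t.choose 2 + t := by
  rcases (show t + 1 ≤ r from ht).lt_or_eq with hlt | rfl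
  · exact ⟨r, t + 1, hlt, by omega, by rw [succ_choose_two]; omega⟩
  · refine ⟨t + 1 + 1, 0, by omega, ?_, ?_⟩
    · rw [succ_choose_two (t + 1)]; omega
    · rw [succ_choose_three (t + 1), succ_choose_two t, Nat.choose_zero_succ]; omega

lemma choose_three_add_choose_two_le {δ r t : ℕ} (ht : t < r)
    (h : r.choose 2 + t ≤ δ.choose 2) : r.choose 3 + t.choose 2 ≤ δ.choose 3 := by
  rcases lt_trichotomy r δ with hlt | rfl | hgt
  · have := Nat.choose_le_choose 2 ht.le
    have := Nat.choose_le_choose 3 hlt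
    rw [succ_choose_three] at this
    omega
  · obtain rfl : t = 0 := by omega
    simp
  · have := Nat.choose_le_choose 2 (show δ + 1 ≤ r from hgt)
    rw [succ_choose_two] at this
    obtain rfl : δ = 0 := by omega
    obtain ⟨hr, rfl⟩ : r < 2 ∧ t = 0 := by simpa [Nat.choose_eq_zero_iff] using h
    simp [Nat.choose_eq_zero_of_lt (by omega : r < 3)]

lemma sub_le_of_choose_two_eq {δ k r t : ℕ}
    (h : δ.choose 2 = r.choose 2 + t + (k + 1)) : δ - (k + 2) ≤ t := by
  rcases δ with _ | d
  · omega
  · have hrd : r ≤ d := by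
      by_contra! hdr
      have := Nat.choose_le_choose 2 (show d + 1 ≤ r from hdr)
      omega
    have := Nat.choose_le_choose 2 hrd
    rw [succ_choose_two] at h
    omega

lemma sum_Icc_sub_add_choose_three_add_choose_two_le (δ k : ℕ) {r t : ℕ} (ht : t < r)
    (h : δ.choose 2 = r.choose 2 + t + k) :
    ∑ i ∈ Icc 2 (k + 1), (δ - i) + (r.choose 3 + t.choose 2) ≤ δ.choose 3 := by
  induction k generalizing r t with
  | zero => simpa using choose_three_add_choose_two_le ht h.ge
  | succ k ih =>
    obtain ⟨r', t', ht', hsucc, hstep⟩ := exists_choose_two_add_succ ht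
    have hprev := ih ht' (by omega)
    have hnew := sub_le_of_choose_two_eq h
    rw [sum_Icc_succ_top (by omega)]
    omega

theorem stmt_6 (δ k' r t : ℕ) (hk : k' ≤ δ.choose 2)
    (ht : t < r) (h : δ.choose 2 - k' = r.choose 2 + t) :
    ∑ i ∈ Finset.Icc 2 (min δ (k' + 1)), (δ - i)
      ≤ δ.choose 3 - r.choose 3 - t.choose 2 := by
  have := sum_Icc_sub_add_choose_three_add_choose_two_le δ k' ht (by omega)
  rw [sum_Icc_min_sub_eq]
  omega
end

section
/- Let G be a simple graph on a finite vertex set with exactly n edges, and let r, t be nonnegative integers with 0 ≤ t < r and n = C(r,2) + t. Then the number of triangles in G is at most C(r,3) + C(t,2). -/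
/-!
Triangles form a family of 3-sets whose shadow consists of edges. Suppose there are more than
`C(r,3) + C(t,2)` of them and put `m = max t 1`. After embedding the vertices in `Fin N`, the
initial segment of colex ending at `{r, m, 0}` has `C(r,3) + C(m,2) + 1` sets, no more than the
triangles, so by Kruskal–Katona its shadow, the initial segment ending at `{r, m}`, is no larger
than the set of edges. But that segment has `C(r,2) + m + 1 > C(r,2) + t` sets.
-/

open Finset SimpleGraph
open scoped FinsetFamily

namespace Finset.Colex

section

variable {α : Type*} [LinearOrder α] [Fintype α]

lemma card_initSeg_empty : #(initSeg (∅ : Finset α)) = 1 :=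
  card_eq_one.2 ⟨∅, eq_singleton_iff_unique_mem.2
    ⟨mem_initSeg_self, fun _ ht ↦ card_eq_zero.1 (mem_initSeg.1 ht).1.symm⟩⟩

variable [LocallyFiniteOrderBot α] {a : α} {s : Finset α}

lemma initSeg_insert_of_forall_lt (h : ∀ b ∈ s, b < a) :
    initSeg (insert a s) = powersetCard (#s + 1) (Iio a) ∪ (initSeg s).image (insert a) := by
  have ha : a ∉ s := fun ha ↦ (h a ha).false
  ext A
  simp only [mem_union, mem_powersetCard, mem_image, mem_initSeg, card_insert_of_notMem ha]
  by_cases haA : a ∈ A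
  · have hsub : A ⊆ Iio a ↔ False := iff_false_intro fun hA ↦ (mem_Iio.1 (hA haA)).false
    rw [hsub, false_and, false_or, ← toColex_sdiff_le_toColex_sdiff (u := {a})
      (singleton_subset_iff.2 haA) (by simp), sdiff_singleton_eq_erase, sdiff_singleton_eq_erase,
      erase_insert ha]
    constructor
    · rintro ⟨hcard, hle⟩
      exact ⟨A.erase a, ⟨by rw [card_erase_of_mem haA]; omega, hle⟩, insert_erase haA⟩
    · rintro ⟨B, ⟨hcard, hle⟩, rfl⟩
      have haB : a ∉ B := fun haB ↦ (forall_lt_mono hle h a haB).false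
      rw [card_insert_of_notMem haB, erase_insert haB]
      exact ⟨by omega, hle⟩
  · have himage : (∃ B, (#s = #B ∧ toColex B ≤ toColex s) ∧ insert a B = A) ↔ False :=
      iff_false_intro fun ⟨B, _, hB⟩ ↦ haA (hB ▸ mem_insert_self a B)
    rw [himage, or_false, eq_comm (a := #s + 1), and_comm]
    refine and_congr_left' ⟨?_, ?_⟩
    · intro hle b hb
      have hba := forall_le_mono hle
        (forall_mem_insert _ _ _ |>.2 ⟨le_rfl, fun b hb ↦ (h b hb).le⟩) b hb
      exact mem_Iio.2 (hba.lt_of_ne fun hab ↦ haA (hab ▸ hb))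
    · intro hA
      refine (toColex_lt_toColex_iff_exists_forall_lt.2 ⟨a, mem_insert_self a s, haA, ?_⟩).le
      exact fun b hb _ ↦ mem_Iio.1 (hA hb)

lemma card_initSeg_insert_of_forall_lt (h : ∀ b ∈ s, b < a) :
    #(initSeg (insert a s)) = (#(Iio a)).choose (#s + 1) + #(initSeg s) := by
  have hnotMem : ∀ B ∈ initSeg s, a ∉ B := fun B hB haB ↦
    (forall_lt_mono (mem_initSeg.1 hB).2 h a haB).false
  rw [initSeg_insert_of_forall_lt h, card_union_of_disjoint, card_powersetCard,
    card_image_of_injOn]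
  · intro B hB C hC hBC
    simpa [erase_insert (hnotMem B hB), erase_insert (hnotMem C hC)] using
      congrArg (erase · a) hBC
  · refine disjoint_left.2 fun A hA hA' ↦ ?_
    obtain ⟨B, -, rfl⟩ := mem_image.1 hA'
    exact (mem_Iio.1 ((mem_powersetCard.1 hA).1 (mem_insert_self a B))).false

end

variable {N : ℕ}

lemma card_initSeg_singleton (a : Fin N) : #(initSeg {a}) = a + 1 := by
  rw [← LawfulSingleton.insert_empty_eq, card_initSeg_insert_of_forall_lt (by simp),
    card_initSeg_empty, Fin.card_Iio, card_empty, Nat.choose_one_right]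

lemma card_initSeg_pair {a b : Fin N} (hab : a < b) :
    #(initSeg {b, a}) = (b : ℕ).choose 2 + a + 1 := by
  rw [card_initSeg_insert_of_forall_lt (by simpa), card_initSeg_singleton, Fin.card_Iio,
    card_singleton, add_assoc]

lemma card_initSeg_triple {a b c : Fin N} (hab : a < b) (hbc : b < c) :
    #(initSeg {c, b, a}) = (c : ℕ).choose 3 + (b : ℕ).choose 2 + a + 1 := by
  rw [card_initSeg_insert_of_forall_lt (by simp [hbc, hab.trans hbc]), card_initSeg_pair hab,
    Fin.card_Iio, card_pair hab.ne', ← add_assoc, ← add_assoc]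

end Finset.Colex

namespace Finset

theorem card_le_choose_three_add_choose_two_of_card_shadow_le {N r t : ℕ}
    {𝒜 : Finset (Finset (Fin N))} (h𝒜 : (𝒜 : Set (Finset (Fin N))).Sized 3) (hrN : r < N)
    (ht : t < r)
    (hshadow : #(∂ 𝒜) ≤ r.choose 2 + t) : #𝒜 ≤ r.choose 3 + t.choose 2 := by
  obtain hr | hr := le_or_gt r 1
  · obtain rfl : r = 1 := by omega
    obtain rfl : t = 0 := by omega
    refine Nat.le_zero.2 (card_eq_zero.2 (eq_empty_of_forall_notMem fun A hA ↦ ?_))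
    obtain ⟨a, ha⟩ := card_pos.1 (h𝒜 hA ▸ three_pos : 0 < #A)
    exact (card_pos.2 ⟨_, erase_mem_shadow hA ha⟩).not_ge hshadow
  by_contra! h𝒞𝒜
  set m := max t 1
  have hmt : m.choose 2 = t.choose 2 := by
    obtain rfl | ht0 := Nat.eq_zero_or_pos t
    · rfl
    · simp only [m, max_eq_left (Nat.succ_le_of_lt ht0)]
  let a : Fin N := ⟨0, by omega⟩
  let b : Fin N := ⟨m, by omega⟩
  let c : Fin N := ⟨r, hrN⟩
  have hab : a < b := Fin.mk_lt_mk.2 (by omega)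
  have hbc : b < c := Fin.mk_lt_mk.2 (by omega)
  have hcard : #({c, b, a} : Finset (Fin N)) = 3 :=
    card_eq_three.2 ⟨c, b, a, hbc.ne', (hab.trans hbc).ne', hab.ne', rfl⟩
  have hmin : ({c, b, a} : Finset (Fin N)).min' (by simp) = a :=
    le_antisymm (min'_le _ _ (by simp)) (Fin.le_def.2 (Nat.zero_le _))
  have hKK := kruskal_katona h𝒜 (𝒞 := Colex.initSeg {c, b, a})
    (by rw [Colex.card_initSeg_triple hab hbc]; simp [a, b, c, hmt]; omega)
    (hcard ▸ Colex.isInitSeg_initSeg)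
  rw [Colex.shadow_initSeg (by simp), hmin] at hKK
  have hpair : ({c, b, a} : Finset (Fin N)).erase a = {c, b} := by
    rw [erase_insert_of_ne (hab.trans hbc).ne', erase_insert_of_ne hab.ne', erase_singleton,
      LawfulSingleton.insert_empty_eq]
  rw [hpair, Colex.card_initSeg_pair hbc] at hKK
  have : t ≤ m := le_max_left t 1
  simp only [b, c] at hKK
  omega

end Finset

namespace SimpleGraph

variable {V : Type*} [Fintype V] [DecidableEq V] (G : SimpleGraph V) [DecidableRel G.Adj]

lemma shadow_cliqueFinset_subset (k : ℕ) : ∂ (G.cliqueFinset (k + 1)) ⊆ G.cliqueFinset k := by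
  intro s hs
  obtain ⟨A, hA, a, ha, rfl⟩ := mem_shadow_iff.1 hs
  exact mem_cliqueFinset_iff.2 ((mem_cliqueFinset_iff.1 hA).erase_of_mem ha)

lemma cliqueFinset_two_subset_image_edgeFinset :
    G.cliqueFinset 2 ⊆ G.edgeFinset.image Sym2.toFinset := by
  intro s hs
  obtain ⟨hclique, hcard⟩ := mem_cliqueFinset_iff.1 hs
  obtain ⟨x, y, hxy, rfl⟩ := card_eq_two.1 hcard
  exact mem_image.2 ⟨s(x, y), mem_edgeFinset.2 (hclique (by simp) (by simp) hxy),
    Sym2.toFinset_mk_eq⟩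

lemma card_shadow_cliqueFinset_three_le : #(∂ (G.cliqueFinset 3)) ≤ #G.edgeFinset :=
  calc #(∂ (G.cliqueFinset 3))
    _ ≤ #(G.cliqueFinset 2) := card_le_card (G.shadow_cliqueFinset_subset 2)
    _ ≤ #G.edgeFinset :=
      (card_le_card G.cliqueFinset_two_subset_image_edgeFinset).trans card_image_le

end SimpleGraph

theorem stmt_9 {V : Type*} [Fintype V] [DecidableEq V]
    (G : SimpleGraph V) [DecidableRel G.Adj] (n r t : ℕ)
    (hn : G.edgeFinset.card = n) (ht : t < r) (hrt : n = r.choose 2 + t) :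
    (G.cliqueFinset 3).card ≤ r.choose 3 + t.choose 2 := by
  classical
  let f : V ↪ Fin (Fintype.card V + r + 1) :=
    (Fintype.equivFin V).toEmbedding.trans (Fin.castLEEmb (by omega))
  have hcliques : #((G.map f).cliqueFinset 3) = #(G.cliqueFinset 3) := by
    rw [cliqueFinset_map _ _ (by norm_num), card_map]
  rw [← hcliques]
  refine card_le_choose_three_add_choose_two_of_card_shadow_le
    (fun s hs ↦ (mem_cliqueFinset_iff.1 hs).2) (by omega) ht ?_
  calc #(∂ ((G.map f).cliqueFinset 3))
    _ ≤ #(G.map f).edgeFinset := card_shadow_cliqueFinset_three_le _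
    _ = r.choose 2 + t := by rw [card_edgeFinset_map, hn, hrt]
end

section
/- Let G be a finite p-group with G/Z(G) minimally generated by δ elements, nilpotency class c, and |γ₂G| = p^k, where γ₂G is the commutator subgroup. Then ∏_{i=2}^{c} |γ_iG/γ_{i+1}G ⊗ (G/Z(G)γ₂G)| ≤ p^{kδ}. -/
/-!
Since `Ḡ^{ab}` is generated by `δ` elements it is a quotient of `ℤ^δ`, so by right exactness of
the tensor product `|A ⊗ Ḡ^{ab}| ≤ |A ⊗ ℤ^δ| = |A|^δ` for every finite abelian group `A`.
Taking `A = γᵢG/γᵢ₊₁G`, the product of the orders telescopes along the lower central series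
to `|γ₂G|^δ = p^{kδ}`.
-/

open scoped TensorProduct

theorem card_tensorProduct_le_pow_of_span_eq_top {M N ι : Type*} [AddCommGroup M] [AddCommGroup N]
    [Finite M] [Fintype ι] {v : ι → N} (hv : Submodule.span ℤ (Set.range v) = ⊤) :
    Nat.card (M ⊗[ℤ] N) ≤ Nat.card M ^ Fintype.card ι := by
  classical
  have hsurj : Function.Surjective ((Fintype.linearCombination ℤ v).lTensor M) :=
    LinearMap.lTensor_surjective M <| by
      rw [← LinearMap.range_eq_top, Fintype.range_linearCombination, hv]
  let e := TensorProduct.piScalarRight ℤ ℤ M ι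
  have : Finite (M ⊗[ℤ] (ι → ℤ)) := .of_equiv _ e.symm.toEquiv
  calc Nat.card (M ⊗[ℤ] N) ≤ Nat.card (M ⊗[ℤ] (ι → ℤ)) := Nat.card_le_card_of_surjective _ hsurj
    _ = Nat.card (ι → M) := Nat.card_congr e.toEquiv
    _ = Nat.card M ^ Fintype.card ι := by rw [Nat.card_fun, Nat.card_eq_fintype_card (α := ι)]

theorem span_range_ofMul_eq_top {A : Type*} [CommGroup A] {S : Set A}
    (hS : Subgroup.closure S = ⊤) :
    Submodule.span ℤ (Set.range fun x : S ↦ Additive.ofMul (x : A)) = ⊤ := by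
  apply Submodule.toAddSubgroup_injective
  have hrange : (Set.range fun x : S ↦ Additive.ofMul (x : A)) = Additive.toMul ⁻¹' S := by
    ext x
    exact ⟨by rintro ⟨⟨a, ha⟩, rfl⟩; exact ha, fun hx ↦ ⟨⟨_, hx⟩, rfl⟩⟩
  rw [Submodule.span_int_eq_addSubgroupClosure, hrange, ← Subgroup.toAddSubgroup_closure, hS]
  rfl

theorem card_tensorProduct_additive_le_pow_rank {M A : Type*} [AddCommGroup M] [Finite M]
    [CommGroup A] [Group.FG A] :
    Nat.card (M ⊗[ℤ] Additive A) ≤ Nat.card M ^ Group.rank A := by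
  obtain ⟨S, hcard, hS⟩ := Group.rank_spec A
  simpa [hcard] using card_tensorProduct_le_pow_of_span_eq_top (M := M) (span_range_ofMul_eq_top hS)

theorem card_abelianization_le (G : Type*) [Group G] [Finite G] :
    Nat.card (Abelianization G) ≤ Nat.card G :=
  Nat.card_le_card_of_surjective _ (QuotientGroup.mk'_surjective _)

theorem card_tensorProduct_abelianization_le_pow_rank (Q H : Type*) [Group Q] [Finite Q]
    [Group H] [Group.FG H] :
    Nat.card (Additive (Abelianization Q) ⊗[ℤ] Additive (Abelianization H))
      ≤ Nat.card Q ^ Group.rank H := by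
  have hab : Function.Surjective (Abelianization.of (G := H)) := QuotientGroup.mk'_surjective _
  have : Group.FG (Abelianization H) := Group.fg_of_surjective hab
  calc _ ≤ Nat.card (Additive (Abelianization Q)) ^ Group.rank (Abelianization H) :=
        card_tensorProduct_additive_le_pow_rank
    _ ≤ Nat.card Q ^ Group.rank H :=
        (Nat.pow_le_pow_left (card_abelianization_le Q) _).trans
          (Nat.pow_le_pow_right Nat.card_pos (Group.rank_le_of_surjective _ hab))

theorem Subgroup.prod_card_quotient_subgroupOf_mul_card {G : Type*} [Group G] {H : ℕ → Subgroup G}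
    (hH : Antitone H) {m n : ℕ} (hmn : m ≤ n) :
    (∏ i ∈ Finset.Ioc m n, Nat.card (H (i - 1) ⧸ (H i).subgroupOf (H (i - 1)))) * Nat.card (H n)
      = Nat.card (H m) := by
  induction n, hmn using Nat.le_induction with
  | base => simp
  | succ n hmn ih =>
    rw [Finset.prod_Ioc_succ_top hmn, Nat.add_sub_cancel, mul_assoc,
      ← Nat.card_congr (Subgroup.subgroupOfEquivOfLe (hH n.le_succ)).toEquiv,
      ← Subgroup.card_eq_card_quotient_mul_card_subgroup, ih]

theorem prod_card_lowerCentralSeries_quotient_eq (G : Type*) [Group G] [Group.IsNilpotent G] :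
    ∏ i ∈ Finset.Icc 2 (Group.nilpotencyClass G),
      Nat.card ((⊤ : Subgroup G).lowerCentralSeries (i - 1) ⧸
        ((⊤ : Subgroup G).lowerCentralSeries i).subgroupOf ((⊤ : Subgroup G).lowerCentralSeries (i - 1)))
      = Nat.card ((⊤ : Subgroup G).lowerCentralSeries 1) := by
  rcases Nat.eq_zero_or_pos (Group.nilpotencyClass G) with hc | hc
  · have : Subsingleton G := Group.nilpotencyClass_zero_iff_subsingleton.mp hc
    simp [hc]
  · have htele := Subgroup.prod_card_quotient_subgroupOf_mul_card
      (Subgroup.lowerCentralSeries_antitone (⊤ : Subgroup G)) hc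
    rwa [Subgroup.lowerCentralSeries_nilpotencyClass, Subgroup.card_bot, mul_one,
      ← Finset.Icc_add_one_left_eq_Ioc] at htele

theorem stmt_13_general {G : Type*} [Group G] [Finite G] (p : ℕ) [Group.IsNilpotent G] (δ k : ℕ)
    (hδ : Group.rank (G ⧸ Subgroup.center G) = δ)
    (hk : Nat.card ((⊤ : Subgroup G).lowerCentralSeries 1) = p ^ k) :
    ∏ i ∈ Finset.Icc 2 (Group.nilpotencyClass G),
      Nat.card (TensorProduct ℤ
        (Additive (Abelianization
          (((⊤ : Subgroup G).lowerCentralSeries (i - 1)) ⧸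
            (((⊤ : Subgroup G).lowerCentralSeries i).subgroupOf ((⊤ : Subgroup G).lowerCentralSeries (i - 1))))))
        (Additive (Abelianization (G ⧸ Subgroup.center G))))
      ≤ p ^ (k * δ) := by
  calc _ ≤ ∏ i ∈ Finset.Icc 2 (Group.nilpotencyClass G),
        Nat.card ((⊤ : Subgroup G).lowerCentralSeries (i - 1) ⧸
          ((⊤ : Subgroup G).lowerCentralSeries i).subgroupOf
            ((⊤ : Subgroup G).lowerCentralSeries (i - 1))) ^ δ :=
        Finset.prod_le_prod (fun _ _ ↦ Nat.zero_le _) fun _ _ ↦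
          hδ ▸ card_tensorProduct_abelianization_le_pow_rank _ _
    _ = p ^ (k * δ) := by
        rw [Finset.prod_pow, prod_card_lowerCentralSeries_quotient_eq, hk, pow_mul]

/-- For a finite `p`-group `G` of nilpotency class `c`, with `d(G/Z(G)) = δ` and
`|γ₂G| = p ^ k`, we have `∏_{i=2}^{c} |γᵢG/γᵢ₊₁G ⊗ Ḡ^{ab}| ≤ p ^ (k * δ)`,
where `Ḡ^{ab}` is the abelianization of `Ḡ = G/Z(G)`.
(Here `γᵢG = lowerCentralSeries G (i-1)`, so `γ₂G` is the commutator subgroup;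
each quotient `γᵢG/γᵢ₊₁G` is abelian, so tensoring with its abelianization is the
tensor product of abelian groups from the paper.) -/
theorem stmt_13 {G : Type*} [Group G] [Finite G] (p : ℕ) (hp : p.Prime)
    (hpG : IsPGroup p G) [Group.IsNilpotent G] (δ k : ℕ)
    (hδ : Group.rank (G ⧸ Subgroup.center G) = δ)
    (hk : Nat.card ((⊤ : Subgroup G).lowerCentralSeries 1) = p ^ k) :
    ∏ i ∈ Finset.Icc 2 (Group.nilpotencyClass G),
      Nat.card (TensorProduct ℤ
        (Additive (Abelianization
          (((⊤ : Subgroup G).lowerCentralSeries (i - 1)) ⧸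
            (((⊤ : Subgroup G).lowerCentralSeries i).subgroupOf ((⊤ : Subgroup G).lowerCentralSeries (i - 1))))))
        (Additive (Abelianization (G ⧸ Subgroup.center G))))
      ≤ p ^ (k * δ) :=
  stmt_13_general p δ k hδ hk
end

section
/- Let U and V be finite-dimensional vector spaces over a field F with dim U = n ≥ 3, and let A : U × U → V be an alternating bilinear map whose image spans V with dim V = m. Suppose there is a basis u₁, …, u_n of U such that A(u₁, u_i) for 2 ≤ i ≤ m+1 form a basis of V, A(u₁, u_j) = 0 for j ≥ m+2, A(u_i, u_j) = 0 for m+1 < i < j, and A(u_i, u_j) ∈ span{A(u₁, u_i)} whenever 2 ≤ i ≤ m+1 < j ≤ n. Then for the induced linear map Ψ : U ⊗ U ⊗ U → V ⊗ U given by Ψ(x ⊗ y ⊗ z) = A(x,y) ⊗ z + A(y,z) ⊗ x + A(z,x) ⊗ y, the elements Ψ(u₁ ⊗ u_i ⊗ u_c) for 2 ≤ i ≤ m+1 and i < c ≤ n are linearly independent in V ⊗ U. -/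
/-! Write `e i = A (u₁, u_i)`; these vectors form a basis of `V`, so the `e i ⊗ u_c` form a
basis of `V ⊗ U`. The `(i, c)` coordinate of `Ψ (u₁ ⊗ u_{i'} ⊗ u_{c'})` in it is the Kronecker
delta of `(i, c)` and `(i', c')`: the middle term `A (u_{i'}, u_{c'}) ⊗ u₁` has no
`u_c`-component, and the last term `-A (u₁, u_{c'}) ⊗ u_{i'}` could only contribute if `c' = i`
and `i' = c`, which would give `i < c = i' < c' = i`. So the coordinate functionals are dual to
the vectors `Ψ (u₁ ⊗ u_i ⊗ u_c)`. -/

open TensorProduct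

theorem LinearIndependent.of_apply_eq_ite {R M ι : Type*} [Semiring R] [AddCommMonoid M]
    [Module R M] [DecidableEq ι] {v : ι → M} (f : ι → M →ₗ[R] R)
    (h : ∀ i j, f i (v j) = if i = j then 1 else 0) : LinearIndependent R v := by
  have hfv : LinearMap.pi f ∘ v = fun j => Pi.single j 1 := by
    ext j i
    simp [h, Pi.single_apply]
  exact .of_comp (LinearMap.pi f) (hfv ▸ Pi.linearIndependent_single_one ι R)

section CyclicTmul

variable {F U V ι κ : Type*} [Field F] [AddCommGroup U] [Module F U] [AddCommGroup V]
  [Module F V]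

/-- `Ψ (x ⊗ y ⊗ z)`. -/
def cyclicTmul (A : U →ₗ[F] U →ₗ[F] V) (x y z : U) : V ⊗[F] U :=
  A x y ⊗ₜ z + A y z ⊗ₜ x + A z x ⊗ₜ y

variable {A : U →ₗ[F] U →ₗ[F] V} {u : Module.Basis ι F U} {e : Module.Basis κ F V} {r : ι}
  {σ : κ → ι}

theorem repr_root_apply_eq_zero_of_ne (hleaf : ∀ k, A (u r) (u (σ k)) = e k)
    (hzero : ∀ j ∉ Set.range σ, A (u r) (u j) = 0) {j : ι} {k : κ} (hjk : j ≠ σ k) :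
    e.repr (A (u r) (u j)) k = 0 := by
  by_cases hj : j ∈ Set.range σ
  · obtain ⟨k', rfl⟩ := hj
    have hk : k' ≠ k := by rintro rfl; exact hjk rfl
    rw [hleaf, e.repr_self, Finsupp.single_eq_of_ne' hk]
  · simp [hzero j hj]

theorem tensorProduct_repr_cyclicTmul_of_star [LinearOrder ι] [DecidableEq κ] (hA : A.IsAlt)
    (hr : ∀ k, r < σ k) (hleaf : ∀ k, A (u r) (u (σ k)) = e k)
    (hzero : ∀ j ∉ Set.range σ, A (u r) (u j) = 0) {k k' : κ} {b b' : ι}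
    (hb : σ k < b) (hb' : σ k' < b') :
    (e.tensorProduct u).repr (cyclicTmul A (u r) (u (σ k)) (u b)) (k', b') =
      if (k', b') = (k, b) then 1 else 0 := by
  have hmiddle : u.repr (u r) b' = 0 := by
    rw [u.repr_self, Finsupp.single_eq_of_ne' ((hr k').trans hb').ne]
  have hlast : u.repr (u (σ k)) b' * e.repr (A (u b) (u r)) k' = 0 := by
    by_cases hkb : σ k = b'
    · -- `b = σ k'` would give `σ k' < b' = σ k < b = σ k'`
      have hbk : b ≠ σ k' := by rintro rfl; exact absurd (hb'.trans (hkb ▸ hb)) (lt_irrefl _)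
      rw [← hA.neg, map_neg, Finsupp.neg_apply, repr_root_apply_eq_zero_of_ne hleaf hzero hbk,
        neg_zero, mul_zero]
    · rw [u.repr_self, Finsupp.single_eq_of_ne' hkb, zero_mul]
  simp only [cyclicTmul, map_add, Finsupp.add_apply, Module.Basis.tensorProduct_repr_tmul_apply,
    smul_eq_mul]
  rw [hmiddle, hlast, zero_mul, add_zero, add_zero, hleaf, u.repr_self, e.repr_self]
  simp only [Finsupp.single_apply, Prod.mk.injEq]
  split_ifs <;> grind

theorem linearIndependent_cyclicTmul_of_star [LinearOrder ι] (hA : A.IsAlt)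
    (hr : ∀ k, r < σ k) (hleaf : ∀ k, A (u r) (u (σ k)) = e k)
    (hzero : ∀ j ∉ Set.range σ, A (u r) (u j) = 0) :
    LinearIndependent F
      (fun p : {p : κ × ι // σ p.1 < p.2} => cyclicTmul A (u r) (u (σ p.1.1)) (u p.1.2)) := by
  classical
  refine .of_apply_eq_ite (fun p => Finsupp.lapply p.1 ∘ₗ (e.tensorProduct u).repr.toLinearMap)
    fun ⟨⟨k', b'⟩, hb'⟩ ⟨⟨k, b⟩, hb⟩ => ?_
  simp only [LinearMap.coe_comp, Function.comp_apply, LinearEquiv.coe_coe,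
    Finsupp.lapply_apply, tensorProduct_repr_cyclicTmul_of_star hA hr hleaf hzero hb hb',
    Subtype.mk.injEq]

end CyclicTmul

/-- Indices are 0-based: `u ⟨0, _⟩` is `u₁`, and `1 ≤ i ≤ m`, `i < c ≤ n - 1` stands for
`2 ≤ i ≤ m + 1`, `i < c ≤ n`. -/
theorem stmt_18 {F U V : Type*} [Field F]
    [AddCommGroup U] [Module F U]
    [AddCommGroup V] [Module F V]
    (n m : ℕ) (hmn : m + 1 ≤ n)
    (A : U →ₗ[F] U →ₗ[F] V) (hA : ∀ x : U, A x x = 0)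
    (u : Module.Basis (Fin n) F U)
    (hbasis_indep : LinearIndependent F
      (fun i : Fin m => A (u ⟨0, by omega⟩) (u ⟨i.val + 1, by omega⟩)))
    (hbasis_span : Submodule.span F
      (Set.range fun i : Fin m => A (u ⟨0, by omega⟩) (u ⟨i.val + 1, by omega⟩)) = ⊤)
    (h2 : ∀ j : Fin n, m + 1 ≤ j.val → A (u ⟨0, by omega⟩) (u j) = 0) :
    LinearIndependent F
      (fun q : {q : Fin n × Fin n // 1 ≤ q.1.val ∧ q.1.val ≤ m ∧ q.1 < q.2} =>
        A (u ⟨0, by omega⟩) (u q.val.1) ⊗ₜ[F] u q.val.2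
          + A (u q.val.1) (u q.val.2) ⊗ₜ[F] u ⟨0, by omega⟩
          + A (u q.val.2) (u ⟨0, by omega⟩) ⊗ₜ[F] u q.val.1) := by
  let σ : Fin m → Fin n := fun k => ⟨k.val + 1, by omega⟩
  let e : Module.Basis (Fin m) F V := .mk hbasis_indep hbasis_span.ge
  have hzero : ∀ j ∉ Set.range σ, A (u ⟨0, by omega⟩) (u j) = 0 := by
    intro j hj
    by_cases hj0 : j.val = 0
    · rw [show j = ⟨0, by omega⟩ from Fin.ext hj0, hA]
    · refine h2 j (not_lt.1 fun hjm => hj ⟨⟨j.val - 1, by omega⟩, Fin.ext ?_⟩)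
      simp only [σ]
      omega
  have hindep := linearIndependent_cyclicTmul_of_star (u := u) (e := e) (σ := σ) hA
    (fun k => Nat.succ_pos k.val)
    (fun k => (Module.Basis.mk_apply hbasis_indep hbasis_span.ge k).symm) hzero
  let φ : {q : Fin n × Fin n // 1 ≤ q.1.val ∧ q.1.val ≤ m ∧ q.1 < q.2} →
      {p : Fin m × Fin n // σ p.1 < p.2} :=
    fun q => ⟨(⟨q.1.1.val - 1, by omega⟩, q.1.2), by simp only [σ, Fin.lt_def]; omega⟩
  have hφ : Function.Injective φ := fun q q' h => by
    simp only [φ, Subtype.mk.injEq, Prod.mk.injEq, Fin.mk.injEq] at h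
    exact Subtype.ext (Prod.ext (Fin.ext (by omega)) h.2)
  have hσφ : ∀ q, σ (φ q).1.1 = q.1.1 := fun q => Fin.ext (Nat.sub_add_cancel q.2.1)
  convert hindep.comp φ hφ using 1
  funext q
  rw [Function.comp_apply, hσφ]
  rfl
end
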